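/- Let r be a real number with r ≠ 0, 1, −1, let I ⊆ ℝ be an open interval, and let φ₁, φ₂ : I → ℝ be continuously differentiable with φ₁ > 0 on I, satisfying φ₂′(s)·φ₁(s)^r = −1 and (r/(r+1))·φ₂(s) = φ₁′(s) for all s ∈ I. Let D ⊆ {(x₁, x₂) ∈ ℝ² : x₁ > 0} be open and let v¹, v² : D → ℝ be continuously differentiable functions such that for every (x₁, x₂) ∈ D one has x₂ − v²(x₁,x₂) ∈ I, v¹(x₁,x₂) = x₁^{−1/(r+1)}·φ₁(x₂ − v²(x₁,x₂)), v²(x₁,x₂) = x₁^{r/(r+1)}·φ₂(x₂ − v²(x₁,x₂)), and 1 + x₁^{r/(r+1)}·φ₂′(x₂ − v²(x₁,x₂)) ≠ 0. Then at every point of D: ∂v¹/∂x₂ = ∂v²/∂x₁, 1 − (v¹)^r ≠ 0, and ∂v²/∂x₂ = 1/(1 − (v¹)^r). -/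

import Mathlib

/-!
Differentiating `v² = x₁^{r/(r+1)} φ₂(x₂ − v²)` implicitly along each coordinate line gives
`v²_{x₂}(1 + c) = c` and `v²_{x₁}(1 + c) = (r/(r+1)) x₁^{−1/(r+1)} φ₂`, where
`c = x₁^{r/(r+1)} φ₂′(x₂ − v²)`. The powers of `x₁` in `c · (v¹)^r` cancel, so the first reduced
equation gives `c · (v¹)^r = −1`, i.e. `1 − (v¹)^r = (1 + c)/c`; the second reduced equation turns
`v²_{x₁}` into `x₁^{−1/(r+1)} φ₁′ / (1 + c)`, which is also what differentiating the ansatz for `v¹`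
in `x₂` gives.
-/

/-- Partial derivative with respect to the first variable. -/
noncomputable def pd1 (u : ℝ × ℝ → ℝ) (p : ℝ × ℝ) : ℝ := deriv (fun x₁ => u (x₁, p.2)) p.1

/-- Partial derivative with respect to the second variable. -/
noncomputable def pd2 (u : ℝ × ℝ → ℝ) (p : ℝ × ℝ) : ℝ := deriv (fun x₂ => u (p.1, x₂)) p.2

open Filter Topology

theorem HasDerivAt.mul_one_add_eq_of_eventuallyEq_mul_comp_sub {f m g ψ : ℝ → ℝ}
    {x f' m' g' ψ' : ℝ} (hf : HasDerivAt f f' x) (hm : HasDerivAt m m' x)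
    (hg : HasDerivAt g g' x) (hψ : HasDerivAt ψ ψ' (g x - f x))
    (heq : f =ᶠ[𝓝 x] fun y => m y * ψ (g y - f y)) :
    f' * (1 + m x * ψ') = m' * ψ (g x - f x) + m x * ψ' * g' := by
  have h : f' = m' * ψ (g x - f x) + m x * (ψ' * (g' - f')) :=
    hf.unique ((hm.mul (hψ.comp x (hg.sub hf))).congr_of_eventuallyEq heq)
  linear_combination h

theorem hasDerivAt_pd1 {u : ℝ × ℝ → ℝ} {p : ℝ × ℝ} (hu : DifferentiableAt ℝ u p) :
    HasDerivAt (fun x₁ => u (x₁, p.2)) (pd1 u p) p.1 :=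
  (hu.comp p.1 (differentiableAt_id.prodMk (differentiableAt_const p.2))).hasDerivAt

theorem hasDerivAt_pd2 {u : ℝ × ℝ → ℝ} {p : ℝ × ℝ} (hu : DifferentiableAt ℝ u p) :
    HasDerivAt (fun x₂ => u (p.1, x₂)) (pd2 u p) p.2 :=
  (hu.comp p.2 ((differentiableAt_const p.1).prodMk differentiableAt_id)).hasDerivAt

theorem Filter.Eventually.slice_fst {X Y : Type*} [TopologicalSpace X] [TopologicalSpace Y]
    {P : X × Y → Prop} {p : X × Y} (h : ∀ᶠ q in 𝓝 p, P q) :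
    ∀ᶠ x₁ in 𝓝 p.1, P (x₁, p.2) :=
  (continuous_id.prodMk continuous_const).continuousAt.eventually h

theorem Filter.Eventually.slice_snd {X Y : Type*} [TopologicalSpace X] [TopologicalSpace Y]
    {P : X × Y → Prop} {p : X × Y} (h : ∀ᶠ q in 𝓝 p, P q) :
    ∀ᶠ x₂ in 𝓝 p.2, P (p.1, x₂) :=
  (continuous_const.prodMk continuous_id).continuousAt.eventually h

section ImplicitAnsatz

variable {ψ χ : ℝ → ℝ} {v₁ v₂ : ℝ × ℝ → ℝ} {p : ℝ × ℝ} {j k : ℝ}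

theorem pd2_mul_one_add_of_implicit (hv₂ : DifferentiableAt ℝ v₂ p)
    (hψ : DifferentiableAt ℝ ψ (p.2 - v₂ p))
    (hans : ∀ᶠ q in 𝓝 p, v₂ q = q.1 ^ k * ψ (q.2 - v₂ q)) :
    pd2 v₂ p * (1 + p.1 ^ k * deriv ψ (p.2 - v₂ p)) = p.1 ^ k * deriv ψ (p.2 - v₂ p) := by
  have h := (hasDerivAt_pd2 hv₂).mul_one_add_eq_of_eventuallyEq_mul_comp_sub
    (hasDerivAt_const p.2 (p.1 ^ k)) (hasDerivAt_id p.2) hψ.hasDerivAt hans.slice_snd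
  simpa using h

theorem pd1_mul_one_add_of_implicit (hp : 0 < p.1) (hv₂ : DifferentiableAt ℝ v₂ p)
    (hψ : DifferentiableAt ℝ ψ (p.2 - v₂ p))
    (hans : ∀ᶠ q in 𝓝 p, v₂ q = q.1 ^ k * ψ (q.2 - v₂ q)) :
    pd1 v₂ p * (1 + p.1 ^ k * deriv ψ (p.2 - v₂ p)) = k * p.1 ^ (k - 1) * ψ (p.2 - v₂ p) := by
  have h := (hasDerivAt_pd1 hv₂).mul_one_add_eq_of_eventuallyEq_mul_comp_sub
    (Real.hasDerivAt_rpow_const (Or.inl hp.ne')) (hasDerivAt_const p.1 p.2) hψ.hasDerivAt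
    hans.slice_fst
  simpa using h

theorem pd2_eq_of_implicit (hv₂ : DifferentiableAt ℝ v₂ p)
    (hχ : DifferentiableAt ℝ χ (p.2 - v₂ p))
    (hans : ∀ᶠ q in 𝓝 p, v₁ q = q.1 ^ j * χ (q.2 - v₂ q)) :
    pd2 v₁ p = p.1 ^ j * deriv χ (p.2 - v₂ p) * (1 - pd2 v₂ p) := by
  have h := ((hχ.hasDerivAt.comp p.2 ((hasDerivAt_id p.2).sub (hasDerivAt_pd2 hv₂))).const_mul
    (p.1 ^ j)).congr_of_eventuallyEq hans.slice_snd
  rw [pd2, h.deriv, mul_assoc]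

end ImplicitAnsatz

theorem Real.rpow_mul_mul_rpow_of_add_mul_eq_zero {a x j k r : ℝ} (ha : 0 < a) (hx : 0 ≤ x)
    (hjk : k + j * r = 0) : a ^ k * (a ^ j * x) ^ r = x ^ r := by
  rw [Real.mul_rpow (Real.rpow_nonneg ha.le j) hx, ← Real.rpow_mul ha.le, ← mul_assoc,
    ← Real.rpow_add ha, hjk, Real.rpow_zero, one_mul]

theorem implicit_ansatz_solves_system_general (r : ℝ)
    (hrm1 : r ≠ -1)
    (I : Set ℝ) (hIopen : IsOpen I)
    (φ₁ φ₂ : ℝ → ℝ) (hφ₁ : ContDiffOn ℝ 1 φ₁ I) (hφ₂ : ContDiffOn ℝ 1 φ₂ I)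
    (hφ₁pos : ∀ s ∈ I, 0 < φ₁ s)
    (hsys1 : ∀ s ∈ I, deriv φ₂ s * φ₁ s ^ r = -1)
    (hsys2 : ∀ s ∈ I, r / (r + 1) * φ₂ s = deriv φ₁ s)
    (D : Set (ℝ × ℝ)) (hD : IsOpen D) (hDpos : ∀ p ∈ D, 0 < p.1)
    (v₁ v₂ : ℝ × ℝ → ℝ) (hv₂ : ContDiffOn ℝ 1 v₂ D)
    (hmem : ∀ p ∈ D, p.2 - v₂ p ∈ I)
    (hans1 : ∀ p ∈ D, v₁ p = p.1 ^ (-(1 / (r + 1))) * φ₁ (p.2 - v₂ p))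
    (hans2 : ∀ p ∈ D, v₂ p = p.1 ^ (r / (r + 1)) * φ₂ (p.2 - v₂ p))
    (hden : ∀ p ∈ D, 1 + p.1 ^ (r / (r + 1)) * deriv φ₂ (p.2 - v₂ p) ≠ 0) :
    ∀ p ∈ D,
      pd2 v₁ p = pd1 v₂ p ∧
      1 - v₁ p ^ r ≠ 0 ∧
      pd2 v₂ p = 1 / (1 - v₁ p ^ r) := by
  intro p hp
  have hr : r + 1 ≠ 0 := fun h => hrm1 (by linarith)
  have hs : p.2 - v₂ p ∈ I := hmem p hp
  have hDp : D ∈ 𝓝 p := hD.mem_nhds hp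
  have hv₂p := (hv₂.differentiableOn one_ne_zero).differentiableAt hDp
  have hφ₁s := (hφ₁.differentiableOn one_ne_zero).differentiableAt (hIopen.mem_nhds hs)
  have hφ₂s := (hφ₂.differentiableOn one_ne_zero).differentiableAt (hIopen.mem_nhds hs)
  have hans₂ := eventually_of_mem hDp hans2
  set c := p.1 ^ (r / (r + 1)) * deriv φ₂ (p.2 - v₂ p)
  have hv₂x₂ : pd2 v₂ p * (1 + c) = c := pd2_mul_one_add_of_implicit hv₂p hφ₂s hans₂
  have hv₂x₁ : pd1 v₂ p * (1 + c) = p.1 ^ (-(1 / (r + 1))) * deriv φ₁ (p.2 - v₂ p) := by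
    rw [pd1_mul_one_add_of_implicit (hDpos p hp) hv₂p hφ₂s hans₂, ← hsys2 _ hs,
      show r / (r + 1) - 1 = -(1 / (r + 1)) by field_simp; ring]
    ring
  have hv₁x₂ := pd2_eq_of_implicit hv₂p hφ₁s (eventually_of_mem hDp hans1)
  have hcv : c * v₁ p ^ r = -1 := by
    rw [hans1 p hp, mul_right_comm, Real.rpow_mul_mul_rpow_of_add_mul_eq_zero (hDpos p hp)
      (hφ₁pos _ hs).le (by field_simp; ring), mul_comm, hsys1 _ hs]
  have hc : c ≠ 0 := left_ne_zero_of_mul (by rw [hcv]; norm_num)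
  have hc₁ : 1 + c ≠ 0 := hden p hp
  -- `c · (1 − (v¹)^r) = 1 + c`
  have hne : 1 - v₁ p ^ r ≠ 0 := fun h => hc₁ (by linear_combination c * h + hcv)
  refine ⟨mul_right_cancel₀ hc₁ ?_, hne, ?_⟩
  · rw [hv₁x₂, hv₂x₁]
    linear_combination (-(p.1 ^ (-(1 / (r + 1))) * deriv φ₁ (p.2 - v₂ p))) * hv₂x₂
  · rw [eq_div_iff hne]
    exact mul_left_cancel₀ hc (by linear_combination hv₂x₂ - pd2 v₂ p * hcv)

/-- If `φ₁ > 0`, `φ₂` solve the reduced system `φ₂′φ₁^r = −1`, `(r/(r+1))φ₂ = φ₁′` on an open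
interval `I`, and `v¹, v²` satisfy the implicit ansatz
`v¹ = x₁^{−1/(r+1)}φ₁(x₂ − v²)`, `v² = x₁^{r/(r+1)}φ₂(x₂ − v²)` on an open set
`D ⊆ {x₁ > 0}` with `1 + x₁^{r/(r+1)}φ₂′(x₂ − v²) ≠ 0`, then `v¹, v²` solve the system
`v¹_{x₂} = v²_{x₁}`, `v²_{x₂} = 1/(1 − (v¹)^r)` on `D`. -/
theorem implicit_ansatz_solves_system (r : ℝ)
    (hr0 : r ≠ 0) (hr1 : r ≠ 1) (hrm1 : r ≠ -1)
    (I : Set ℝ) (hIopen : IsOpen I) (hIconn : I.OrdConnected)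
    (φ₁ φ₂ : ℝ → ℝ) (hφ₁ : ContDiffOn ℝ 1 φ₁ I) (hφ₂ : ContDiffOn ℝ 1 φ₂ I)
    (hφ₁pos : ∀ s ∈ I, 0 < φ₁ s)
    (hsys1 : ∀ s ∈ I, deriv φ₂ s * φ₁ s ^ r = -1)
    (hsys2 : ∀ s ∈ I, r / (r + 1) * φ₂ s = deriv φ₁ s)
    (D : Set (ℝ × ℝ)) (hD : IsOpen D) (hDpos : ∀ p ∈ D, 0 < p.1)
    (v₁ v₂ : ℝ × ℝ → ℝ) (hv₁ : ContDiffOn ℝ 1 v₁ D) (hv₂ : ContDiffOn ℝ 1 v₂ D)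
    (hmem : ∀ p ∈ D, p.2 - v₂ p ∈ I)
    (hans1 : ∀ p ∈ D, v₁ p = p.1 ^ (-(1 / (r + 1))) * φ₁ (p.2 - v₂ p))
    (hans2 : ∀ p ∈ D, v₂ p = p.1 ^ (r / (r + 1)) * φ₂ (p.2 - v₂ p))
    (hden : ∀ p ∈ D, 1 + p.1 ^ (r / (r + 1)) * deriv φ₂ (p.2 - v₂ p) ≠ 0) :
    ∀ p ∈ D,
      pd2 v₁ p = pd1 v₂ p ∧
      1 - v₁ p ^ r ≠ 0 ∧
      pd2 v₂ p = 1 / (1 - v₁ p ^ r) :=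
  implicit_ansatz_solves_system_general r hrm1 I hIopen φ₁ φ₂ hφ₁ hφ₂ hφ₁pos hsys1 hsys2 D hD hDpos
    v₁ v₂ hv₂ hmem hans1 hans2 hden
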